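/- arXiv:2006.10456 — 5 statements merged into one kernel-verified Lean document; each statement's English description precedes it below -/
import Mathlib

section
/- Let G be a graph with maximum degree Δ and let 0 < θ < 1/11. Call an edge (u,v) θ-balanced if min{deg(u),deg(v)} ≥ (1−θ)·max{deg(u),deg(v)}, and θ-friend if additionally |N(u) ∩ N(v)| ≥ (1−θ)·min{deg(u),deg(v)}. Call a vertex v θ-dense if at least (1−θ)·deg(v) edges incident to v are θ-friend edges. Let H_θ be the subgraph on θ-dense vertices with the θ-friend edges. Then for any two vertices u, v in the same connected component C of H_θ, we have |N(u) ∩ N(v)| ≥ (1−5θ)·min{deg(u),deg(v)} and min{deg(u),deg(v)} ≥ (1−2θ)·max{deg(u),deg(v)}, where N(·) and deg(·) refer to the original graph G. -/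
/-!
Two vertices `a`, `b` with a common θ-friend `x` are already close: the codegree triangle
inequality `|N a ∩ N b| ≥ |N a ∩ N x| + |N x ∩ N b| - deg x` gives the `(1 - 5θ)` bound, and
balance composes to `(1 - θ)² ≥ 1 - 2θ`. Along a friend path `u ⋯ w — v` of dense vertices,
if `u, w` are close then `|N u ∩ N v|` is large, while at most `θ deg u + θ deg v` of these
common neighbours fail to be friends of both `u` and `v`; for `θ < 1/11` this leaves a common
friend, so `u, v` are close by the first step.
-/

open Set Relation

lemma Set.ncard_inter_add_ncard_inter_le {α : Type*} [Finite α] (s t r : Set α) :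
    (s ∩ t).ncard + (t ∩ r).ncard ≤ (s ∩ r).ncard + t.ncard := by
  have hcover : s ∩ t ⊆ (s ∩ r) ∪ (t \ r) := fun y ⟨hs, ht⟩ ↦ by
    by_cases hr : y ∈ r
    · exact Or.inl ⟨hs, hr⟩
    · exact Or.inr ⟨ht, hr⟩
  have hsplit := ncard_inter_add_ncard_sdiff_eq_ncard t r
  have := (ncard_le_ncard hcover).trans (ncard_union_le _ _)
  omega

namespace SimpleGraph

variable {V : Type*} (G : SimpleGraph V)

noncomputable def deg (v : V) : ℝ := (G.neighborSet v).ncard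

noncomputable def codeg (u v : V) : ℝ := (G.neighborSet u ∩ G.neighborSet v).ncard

def IsBalanced (θ : ℝ) (u v : V) : Prop :=
  (1 - θ) * max (G.deg u) (G.deg v) ≤ min (G.deg u) (G.deg v)

def IsFriend (θ : ℝ) (u v : V) : Prop :=
  G.Adj u v ∧ G.IsBalanced θ u v ∧ (1 - θ) * min (G.deg u) (G.deg v) ≤ G.codeg u v

def friendSet (θ : ℝ) (v : V) : Set V := {u | G.IsFriend θ v u}

def IsDense (θ : ℝ) (v : V) : Prop := (1 - θ) * G.deg v ≤ ((G.friendSet θ v).ncard : ℝ)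

def IsClosePair (θ : ℝ) (u v : V) : Prop :=
  (1 - 5 * θ) * min (G.deg u) (G.deg v) ≤ G.codeg u v ∧ G.IsBalanced (2 * θ) u v

variable {G} {θ : ℝ} {u v w x : V}

variable (G) in
lemma deg_nonneg (v : V) : 0 ≤ G.deg v := Nat.cast_nonneg _

variable (G) in
lemma codeg_comm (u v : V) : G.codeg u v = G.codeg v u := by
  rw [codeg, codeg, inter_comm]

variable (G) in
lemma codeg_self (v : V) : G.codeg v v = G.deg v := by
  rw [codeg, inter_self, deg]

lemma IsBalanced.symm (h : G.IsBalanced θ u v) : G.IsBalanced θ v u := by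
  rwa [IsBalanced, max_comm, min_comm]

lemma IsBalanced.mul_deg_le (hθ : θ ≤ 1) (h : G.IsBalanced θ u v) :
    (1 - θ) * G.deg u ≤ G.deg v :=
  (mul_le_mul_of_nonneg_left (le_max_left _ _) (by linarith)).trans (h.trans (min_le_right _ _))

lemma IsFriend.symm (h : G.IsFriend θ u v) : G.IsFriend θ v u := by
  obtain ⟨hadj, hbal, hcodeg⟩ := h
  exact ⟨hadj.symm, hbal.symm, by rwa [min_comm, codeg_comm]⟩

lemma IsClosePair.symm (h : G.IsClosePair θ u v) : G.IsClosePair θ v u := by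
  obtain ⟨hcodeg, hbal⟩ := h
  exact ⟨by rwa [min_comm, codeg_comm], hbal.symm⟩

lemma isClosePair_refl (hθ : 0 ≤ θ) (v : V) : G.IsClosePair θ v v := by
  have := G.deg_nonneg v
  constructor
  · rw [min_self, codeg_self]; nlinarith
  · rw [IsBalanced, min_self, max_self]; nlinarith

section Finite

variable [Finite V]

lemma deg_pos_of_adj (h : G.Adj u v) : 0 < G.deg u := by
  unfold deg
  exact_mod_cast (ncard_pos (toFinite _)).2 ⟨v, h⟩

variable (G) in
lemma codeg_add_codeg_le (u w v : V) : G.codeg u w + G.codeg w v ≤ G.codeg u v + G.deg w := by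
  unfold codeg deg
  exact_mod_cast ncard_inter_add_ncard_inter_le _ _ _

lemma IsDense.ncard_sdiff_friendSet_le (hv : G.IsDense θ v) :
    ((G.neighborSet v \ G.friendSet θ v).ncard : ℝ) ≤ θ * G.deg v := by
  have hsub : G.friendSet θ v ⊆ G.neighborSet v := fun _ h ↦ h.1
  rw [cast_ncard_sdiff hsub (toFinite _)]
  unfold IsDense deg at *
  linarith

lemma codeg_le_of_isDense (hu : G.IsDense θ u) (hv : G.IsDense θ v) :
    G.codeg u v ≤ ((G.friendSet θ u ∩ G.friendSet θ v).ncard : ℝ) + θ * G.deg u + θ * G.deg v := by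
  have hcover : G.neighborSet u ∩ G.neighborSet v ⊆ (G.friendSet θ u ∩ G.friendSet θ v) ∪
      (G.neighborSet u \ G.friendSet θ u) ∪ (G.neighborSet v \ G.friendSet θ v) := by
    rintro y ⟨hyu, hyv⟩
    by_cases hfu : y ∈ G.friendSet θ u
    · by_cases hfv : y ∈ G.friendSet θ v
      · exact Or.inl (Or.inl ⟨hfu, hfv⟩)
      · exact Or.inr ⟨hyv, hfv⟩
    · exact Or.inl (Or.inr ⟨hyu, hfu⟩)
  have hcard : G.codeg u v ≤ ((G.friendSet θ u ∩ G.friendSet θ v).ncard : ℝ) +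
      (G.neighborSet u \ G.friendSet θ u).ncard + (G.neighborSet v \ G.friendSet θ v).ncard := by
    unfold codeg
    exact_mod_cast (ncard_le_ncard hcover).trans
      ((ncard_union_le _ _).trans (Nat.add_le_add_right (ncard_union_le _ _) _))
  linarith [hu.ncard_sdiff_friendSet_le, hv.ncard_sdiff_friendSet_le]

lemma IsFriend.isClosePair_of_deg_le (hθ0 : 0 ≤ θ) (hθ : θ ≤ 1 / 2) (hux : G.IsFriend θ u x)
    (hxv : G.IsFriend θ x v) (huv : G.deg u ≤ G.deg v) : G.IsClosePair θ u v := by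
  obtain ⟨-, hbal₁, hcodeg₁⟩ := hux
  obtain ⟨-, hbal₂, hcodeg₂⟩ := hxv
  have hθ1 : θ ≤ 1 := by linarith
  have hu0 := G.deg_nonneg u
  have hdux := hbal₁.mul_deg_le hθ1
  have hdxu := hbal₁.symm.mul_deg_le hθ1
  have hdvx := hbal₂.symm.mul_deg_le hθ1
  have hmin₁ : (1 - θ) * G.deg u ≤ min (G.deg u) (G.deg x) := le_min (by nlinarith) hdux
  have hmin₂ : (1 - θ) * G.deg u ≤ min (G.deg x) (G.deg v) := le_min hdux (by nlinarith)
  have hc₁ : (1 - θ) * ((1 - θ) * G.deg u) ≤ G.codeg u x :=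
    (mul_le_mul_of_nonneg_left hmin₁ (by linarith)).trans hcodeg₁
  have hc₂ : (1 - θ) * ((1 - θ) * G.deg u) ≤ G.codeg x v :=
    (mul_le_mul_of_nonneg_left hmin₂ (by linarith)).trans hcodeg₂
  have htri := G.codeg_add_codeg_le u x v
  refine ⟨?_, ?_⟩
  · rw [min_eq_left huv]
    -- the bounds give `(1 - θ) codeg u v ≥ (2 (1 - θ)³ - 1) deg u`, which is
    -- `(1 - θ) (1 - 5θ) deg u + θ² (1 - 2θ) deg u`
    have : (1 - θ) * ((1 - 5 * θ) * G.deg u) ≤ (1 - θ) * G.codeg u v := by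
      nlinarith [mul_nonneg (mul_nonneg (sq_nonneg θ) (by linarith : (0 : ℝ) ≤ 1 - 2 * θ)) hu0]
    exact le_of_mul_le_mul_left this (by linarith)
  · rw [IsBalanced, min_eq_left huv, max_eq_right huv]
    nlinarith [mul_le_mul_of_nonneg_left hdvx (by linarith : (0 : ℝ) ≤ 1 - θ),
      mul_nonneg (sq_nonneg θ) (G.deg_nonneg v)]

lemma IsFriend.isClosePair (hθ0 : 0 ≤ θ) (hθ : θ ≤ 1 / 2) (hux : G.IsFriend θ u x)
    (hxv : G.IsFriend θ x v) : G.IsClosePair θ u v := by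
  rcases le_total (G.deg u) (G.deg v) with h | h
  · exact hux.isClosePair_of_deg_le hθ0 hθ hxv h
  · exact (hxv.symm.isClosePair_of_deg_le hθ0 hθ hux.symm h).symm

lemma IsClosePair.exists_common_friend (hθ0 : 0 ≤ θ) (hθ : θ < 1 / 11)
    (huw : G.IsClosePair θ u w) (hwv : G.IsFriend θ w v) (hu : G.IsDense θ u)
    (hv : G.IsDense θ v) : ∃ x, G.IsFriend θ u x ∧ G.IsFriend θ v x := by
  obtain ⟨hcodeg₁, hbal₁⟩ := huw
  obtain ⟨hadj, hbal₂, hcodeg₂⟩ := hwv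
  have hw := deg_pos_of_adj hadj
  have hduw := hbal₁.mul_deg_le (by linarith)
  have hdwu := hbal₁.symm.mul_deg_le (by linarith)
  have hdwv := hbal₂.mul_deg_le (by linarith)
  have hdvw := hbal₂.symm.mul_deg_le (by linarith)
  have hc₁ : (1 - 5 * θ) * ((1 - 2 * θ) * G.deg w) ≤ G.codeg u w :=
    (mul_le_mul_of_nonneg_left (le_min hdwu (by nlinarith)) (by linarith)).trans hcodeg₁
  have hc₂ : (1 - θ) * ((1 - θ) * G.deg w) ≤ G.codeg w v :=
    (mul_le_mul_of_nonneg_left (le_min (by nlinarith) hdwv) (by linarith)).trans hcodeg₂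
  have hdu : θ * G.deg u ≤ θ * (11 / 9 * G.deg w) :=
    mul_le_mul_of_nonneg_left (by nlinarith [G.deg_nonneg u]) hθ0
  have hdv : θ * G.deg v ≤ θ * (11 / 10 * G.deg w) :=
    mul_le_mul_of_nonneg_left (by nlinarith [G.deg_nonneg v]) hθ0
  -- `(1 - 5θ)(1 - 2θ) + (1 - θ)² - 1 - θ (11/9 + 11/10)`, positive for `θ < 1/11`
  have hkey : 0 < (1 - 1019 / 90 * θ + 11 * θ ^ 2) * G.deg w :=
    mul_pos (by nlinarith) hw
  have hpos : 0 < ((G.friendSet θ u ∩ G.friendSet θ v).ncard : ℝ) := by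
    nlinarith [G.codeg_add_codeg_le u w v, codeg_le_of_isDense hu hv]
  exact nonempty_of_ncard_ne_zero (by exact_mod_cast hpos.ne')

lemma isClosePair_of_reflTransGen (hθ0 : 0 ≤ θ) (hθ : θ < 1 / 11) (hu : G.IsDense θ u)
    (h : ReflTransGen (fun a b ↦ G.IsFriend θ a b ∧ G.IsDense θ a ∧ G.IsDense θ b) u v) :
    G.IsClosePair θ u v := by
  induction h with
  | refl => exact isClosePair_refl hθ0 u
  | tail _ hwv ih =>
    obtain ⟨x, hux, hvx⟩ := ih.exists_common_friend hθ0 hθ hwv.1 hu hwv.2.2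
    exact hux.isClosePair hθ0 (by linarith) hvx.symm

end Finite

end SimpleGraph

theorem stmt_0_general {V : Type*} [Fintype V] (G : SimpleGraph V) (θ : ℝ)
    (hθ0 : 0 < θ) (hθ1 : θ < 1 / 11)
    (deg : V → ℝ) (hdeg : ∀ v, deg v = ((G.neighborSet v).ncard : ℝ))
    (friend : V → V → Prop)
    (hfriend : ∀ u v, friend u v ↔ G.Adj u v ∧
        (1 - θ) * max (deg u) (deg v) ≤ min (deg u) (deg v) ∧
        (1 - θ) * min (deg u) (deg v) ≤ ((G.neighborSet u ∩ G.neighborSet v).ncard : ℝ))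
    (dens : V → Prop)
    (hdens : ∀ v, dens v ↔ (1 - θ) * deg v ≤ (({u | friend v u}).ncard : ℝ))
    (u v : V) (hu : dens u)
    (hreach : Relation.ReflTransGen (fun a b => friend a b ∧ dens a ∧ dens b) u v) :
    (1 - 5 * θ) * min (deg u) (deg v) ≤
        ((G.neighborSet u ∩ G.neighborSet v).ncard : ℝ) ∧
    (1 - 2 * θ) * max (deg u) (deg v) ≤ min (deg u) (deg v) := by
  obtain rfl : deg = G.deg := funext hdeg
  obtain rfl : friend = G.IsFriend θ := funext₂ fun a b ↦ propext (hfriend a b)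
  obtain rfl : dens = G.IsDense θ := funext fun a ↦ propext (hdens a)
  exact G.isClosePair_of_reflTransGen hθ0.le hθ1 hu hreach

/-- In the θ-friend/θ-dense decomposition (0 < θ < 1/11), any two
vertices `u v` in the same connected component of `H_θ` satisfy
`|N(u) ∩ N(v)| ≥ (1−5θ)·min{deg u, deg v}` and
`min{deg u, deg v} ≥ (1−2θ)·max{deg u, deg v}`. -/
theorem stmt_0 {V : Type*} [Fintype V] (G : SimpleGraph V) (θ : ℝ)
    (hθ0 : 0 < θ) (hθ1 : θ < 1 / 11)
    (deg : V → ℝ) (hdeg : ∀ v, deg v = ((G.neighborSet v).ncard : ℝ))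
    (friend : V → V → Prop)
    (hfriend : ∀ u v, friend u v ↔ G.Adj u v ∧
        (1 - θ) * max (deg u) (deg v) ≤ min (deg u) (deg v) ∧
        (1 - θ) * min (deg u) (deg v) ≤ ((G.neighborSet u ∩ G.neighborSet v).ncard : ℝ))
    (dens : V → Prop)
    (hdens : ∀ v, dens v ↔ (1 - θ) * deg v ≤ (({u | friend v u}).ncard : ℝ))
    (u v : V) (hu : dens u) (hv : dens v)
    (hreach : Relation.ReflTransGen (fun a b => friend a b ∧ dens a ∧ dens b) u v) :
    (1 - 5 * θ) * min (deg u) (deg v) ≤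
        ((G.neighborSet u ∩ G.neighborSet v).ncard : ℝ) ∧
    (1 - 2 * θ) * max (deg u) (deg v) ≤ min (deg u) (deg v) :=
  stmt_0_general G θ hθ0 hθ1 deg hdeg friend hfriend dens hdens u v hu hreach
end

section
/- In the setting of the θ-friend/θ-dense decomposition with 0 < θ < 1/20, for any vertex v in a connected component C of H_θ, the number of θ-dense vertices adjacent to v in G that lie outside C is at most 2θ·deg(v). -/
/-! A dense neighbour `u` of `v` that is also a friend of `v` is joined to `v` by an edge of
`H_θ`, hence lies in `C`. So the dense neighbours outside `C` are among the non-friend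
neighbours of `v`, of which a dense vertex has at most `θ·deg v`. -/

theorem Set.ncard_diff_le_mul_of_one_sub_mul_le {α : Type*} {s t : Set α} (ht : t.Finite)
    (hst : s ⊆ t) {θ : ℝ} (h : (1 - θ) * t.ncard ≤ s.ncard) :
    ((t \ s).ncard : ℝ) ≤ θ * t.ncard := by
  rw [Set.ncard_sdiff' hst ht, Nat.cast_sub (Set.ncard_le_ncard hst ht)]
  linarith

theorem stmt_1_general {V : Type*} [Fintype V] (G : SimpleGraph V) (θ : ℝ)
    (hθ0 : 0 < θ)
    (deg : V → ℝ) (hdeg : ∀ v, deg v = ((G.neighborSet v).ncard : ℝ))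
    (friend : V → V → Prop)
    (hfriend : ∀ u v, friend u v ↔ G.Adj u v ∧
        (1 - θ) * max (deg u) (deg v) ≤ min (deg u) (deg v) ∧
        (1 - θ) * min (deg u) (deg v) ≤ ((G.neighborSet u ∩ G.neighborSet v).ncard : ℝ))
    (dens : V → Prop)
    (hdens : ∀ v, dens v ↔ (1 - θ) * deg v ≤ (({u | friend v u}).ncard : ℝ))
    (v : V) (hv : dens v) :
    (({u | G.Adj v u ∧ dens u ∧
        ¬ Relation.ReflTransGen (fun a b => friend a b ∧ dens a ∧ dens b) v u}).ncard : ℝ)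
      ≤ 2 * θ * deg v := by
  have friend_sub_nbhd : {u | friend v u} ⊆ G.neighborSet v :=
    fun u hu => ((hfriend v u).1 hu).1
  have outside_sub_nonfriends : {u | G.Adj v u ∧ dens u ∧
      ¬ Relation.ReflTransGen (fun a b => friend a b ∧ dens a ∧ dens b) v u} ⊆
        G.neighborSet v \ {u | friend v u} :=
    fun u ⟨hadj, hu, hout⟩ => ⟨hadj, fun hvu => hout (.single ⟨hvu, hv, hu⟩)⟩
  have few_nonfriends : ((G.neighborSet v \ {u | friend v u}).ncard : ℝ) ≤ θ * deg v := by
    have many_friends := (hdens v).1 hv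
    rw [hdeg] at many_friends ⊢
    exact Set.ncard_diff_le_mul_of_one_sub_mul_le (Set.toFinite _) friend_sub_nbhd many_friends
  have slack_nonneg : 0 ≤ θ * deg v := mul_nonneg hθ0.le (hdeg v ▸ Nat.cast_nonneg _)
  calc _ ≤ ((G.neighborSet v \ {u | friend v u}).ncard : ℝ) := by
        exact_mod_cast Set.ncard_le_ncard outside_sub_nonfriends (Set.toFinite _)
    _ ≤ θ * deg v := few_nonfriends
    _ ≤ 2 * θ * deg v := by linarith

/-- In the θ-friend/θ-dense decomposition (0 < θ < 1/20), for a vertex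
`v` in a connected component `C` of `H_θ`, the number of θ-dense vertices adjacent
to `v` in `G` lying outside `C` is at most `2θ·deg v`. -/
theorem stmt_1 {V : Type*} [Fintype V] (G : SimpleGraph V) (θ : ℝ)
    (hθ0 : 0 < θ) (hθ1 : θ < 1 / 20)
    (deg : V → ℝ) (hdeg : ∀ v, deg v = ((G.neighborSet v).ncard : ℝ))
    (friend : V → V → Prop)
    (hfriend : ∀ u v, friend u v ↔ G.Adj u v ∧
        (1 - θ) * max (deg u) (deg v) ≤ min (deg u) (deg v) ∧
        (1 - θ) * min (deg u) (deg v) ≤ ((G.neighborSet u ∩ G.neighborSet v).ncard : ℝ))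
    (dens : V → Prop)
    (hdens : ∀ v, dens v ↔ (1 - θ) * deg v ≤ (({u | friend v u}).ncard : ℝ))
    (v : V) (hv : dens v) :
    (({u | G.Adj v u ∧ dens u ∧
        ¬ Relation.ReflTransGen (fun a b => friend a b ∧ dens a ∧ dens b) v u}).ncard : ℝ)
      ≤ 2 * θ * deg v :=
  stmt_1_general G θ hθ0 deg hdeg friend hfriend dens hdens v hv
end

section
/- There exists an n-vertex graph G with maximum degree Δ = ℓ, where ℓ = 0.5·√(log₂ n) (assumed to be a positive integer with (ℓ+1) | n), such that if each vertex v independently samples a uniformly random ℓ-subset L(v) of a fixed palette of 2ℓ colors, then with probability 1 − o(1) (as n → ∞) there is no proper coloring of G assigning each vertex a color from its sampled list. Concretely, G may be taken as a disjoint union of n/(ℓ+1) cliques each on ℓ+1 vertices; for each clique the probability that all its vertices sample exactly the same ℓ-subset {1,…,ℓ} is at least n^{−1/2}, and since there are ω(n^{1/2}) independent cliques, with probability 1−o(1) some clique has ∪_{v∈C} L(v) = {1,…,ℓ}, and that clique of ℓ+1 vertices cannot be properly list-colored from only ℓ colors. -/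
/-!
Take `G` to be a disjoint union of `m = n / (ℓ + 1)` cliques on `ℓ + 1` vertices. A list
assignment in which every vertex of some clique receives the same `ℓ`-set `S₀` admits no proper
coloring (pigeonhole), and for each clique this happens for a `Q⁻¹` fraction of the assignments,
`Q = C(2ℓ, ℓ) ^ (ℓ + 1)`, independently over the cliques. So at most a `(1 - Q⁻¹) ^ m ≤ exp (-m / Q)`
fraction of the assignments is colorable, and `m / Q ≥ ℓ` because `n = 2 ^ (4ℓ²)` while
`Q ≤ 2 ^ (2ℓ² + 2ℓ)`.
-/

open Real

theorem Nat.card_pi_forall_ne {ι β : Type*} [Fintype ι] [Finite β] (b : β) :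
    Nat.card {f : ι → β // ∀ i, f i ≠ b} = (Nat.card β - 1) ^ Fintype.card ι := by
  classical
  have := Fintype.ofFinite β
  rw [Nat.card_congr (Equiv.subtypePiEquivPi (p := fun _ f => f ≠ b)), Nat.card_fun,
    Nat.card_eq_fintype_card (α := ι), Nat.card_eq_fintype_card, Nat.card_eq_fintype_card,
    Fintype.card_subtype_compl, Fintype.card_subtype_eq]

theorem Nat.card_pi_finset_len {V α : Type*} [Fintype V] [Fintype α] (ℓ : ℕ) :
    Nat.card {L : V → Finset α // ∀ v, (L v).card = ℓ} =
      (Fintype.card α).choose ℓ ^ Fintype.card V := by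
  rw [Nat.card_congr (Equiv.subtypePiEquivPi (p := fun (_ : V) (s : Finset α) => s.card = ℓ)),
    Nat.card_fun, Nat.card_eq_fintype_card, Fintype.card_finset_len, Nat.card_eq_fintype_card]

namespace SimpleGraph

variable {V ι κ α : Type*}

def ListColorable (G : SimpleGraph V) (L : V → Finset α) : Prop :=
  ∃ c : V → α, (∀ v, c v ∈ L v) ∧ ∀ u v, G.Adj u v → c u ≠ c v

theorem ListColorable.card_le_of_embedding [Fintype κ] {G : SimpleGraph V} {L : V → Finset α}
    (hL : G.ListColorable L) (φ : (⊤ : SimpleGraph κ) ↪g G) {T : Finset α}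
    (hT : ∀ k, L (φ k) ⊆ T) : Fintype.card κ ≤ T.card := by
  obtain ⟨c, hcL, hc⟩ := hL
  rw [← Finset.card_univ]
  refine Finset.card_le_card_of_injOn (c ∘ φ) (fun k _ => hT k (hcL _)) ?_
  intro j _ k _ hjk
  by_contra hne
  exact hc _ _ (φ.map_rel_iff.mpr hne) hjk

/-- `⊥ □ ⊤` is the disjoint union of `|ι|` copies of the complete graph on `κ`. -/
def blockCliques (e : V ≃ ι × κ) : SimpleGraph V :=
  ((⊥ : SimpleGraph ι) □ (⊤ : SimpleGraph κ)).comap e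

def blockEmbedding (e : V ≃ ι × κ) (i : ι) : (⊤ : SimpleGraph κ) ↪g blockCliques e :=
  (Iso.comap e _).symm.toEmbedding.comp (boxProdRight ⊥ ⊤ i)

theorem ncard_neighborSet_blockCliques [Fintype ι] [Fintype κ] (e : V ≃ ι × κ) (v : V) :
    ((blockCliques e).neighborSet v).ncard = Fintype.card κ - 1 := by
  classical
  have : Fintype V := Fintype.ofEquiv _ e.symm
  rw [← Nat.card_coe_set_eq, Nat.card_eq_fintype_card, card_neighborSet_eq_degree,
    blockCliques, ← (Iso.comap e _).degree_eq, degree_boxProd, bot_degree, complete_graph_degree,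
    zero_add]

theorem card_listColorable_blockCliques_le [Fintype ι] [Fintype κ] [Fintype α]
    (e : V ≃ ι × κ) {ℓ : ℕ} (hℓκ : ℓ < Fintype.card κ) (hℓα : ℓ ≤ Fintype.card α) :
    Nat.card {L : V → Finset α // (∀ v, (L v).card = ℓ) ∧ (blockCliques e).ListColorable L}
      ≤ ((Fintype.card α).choose ℓ ^ Fintype.card κ - 1) ^ Fintype.card ι := by
  obtain ⟨S₀, -, hS₀⟩ := Finset.exists_subset_card_eq (s := (Finset.univ : Finset α)) (n := ℓ)
    (by rwa [Finset.card_univ])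
  let S : {S : Finset α // S.card = ℓ} := ⟨S₀, hS₀⟩
  have hcard : Nat.card (κ → {S : Finset α // S.card = ℓ}) =
      (Fintype.card α).choose ℓ ^ Fintype.card κ := by
    rw [Nat.card_fun, Nat.card_eq_fintype_card, Fintype.card_finset_len, Nat.card_eq_fintype_card]
  rw [← hcard, ← Nat.card_pi_forall_ne (fun _ => S)]
  refine Nat.card_le_card_of_injective
    (fun L => ⟨fun i k => ⟨L.1 (e.symm (i, k)), L.2.1 _⟩, fun i hi => ?_⟩) ?_
  · have := L.2.2.card_le_of_embedding (blockEmbedding e i) (T := S₀)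
      (fun k => (congrArg Subtype.val (congrFun hi k)).le)
    omega
  · intro L₁ L₂ h
    ext1
    funext v
    simpa using congrArg Subtype.val (congrFun (congrFun (congrArg Subtype.val h) (e v).1) (e v).2)

end SimpleGraph

theorem sub_one_pow_le_mul_pow {Q t δ : ℝ} {m : ℕ} (hQ : 1 ≤ Q) (hm : t * Q ≤ m)
    (hδ : exp (-t) ≤ δ) : (Q - 1) ^ m ≤ δ * Q ^ m := by
  have hQ₀ : 0 < Q := by linarith
  have hfac : 0 ≤ 1 - Q⁻¹ := sub_nonneg.mpr (inv_le_one_of_one_le₀ hQ)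
  calc (Q - 1) ^ m = (1 - Q⁻¹) ^ m * Q ^ m := by
        rw [← mul_pow, sub_mul, inv_mul_cancel₀ hQ₀.ne', one_mul]
    _ ≤ exp (-Q⁻¹) ^ m * Q ^ m := by
        gcongr
        linarith [add_one_le_exp (-Q⁻¹)]
    _ ≤ exp (-t) * Q ^ m := by
        rw [← exp_nat_mul]
        gcongr
        have : t ≤ m * Q⁻¹ := by rwa [← div_eq_mul_inv, le_div_iff₀ hQ₀]
        linarith
    _ ≤ δ * Q ^ m := by gcongr

theorem eq_two_pow_of_eq_half_sqrt_logb {n ℓ : ℕ} (hℓ : 0 < ℓ)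
    (h : (ℓ : ℝ) = 0.5 * √(logb 2 n)) : n = 2 ^ (4 * ℓ ^ 2) := by
  have hsqrt : √(logb 2 n) = 2 * ℓ := by rw [h]; ring
  have hpos : 0 < logb 2 n := Real.sqrt_pos.mp (by rw [hsqrt]; positivity)
  have hlog : logb 2 n = ((4 * ℓ ^ 2 : ℕ) : ℝ) := by
    rw [← Real.sq_sqrt hpos.le, hsqrt]; push_cast; ring
  have hn : (0 : ℝ) < n := by
    rcases Nat.eq_zero_or_pos n with rfl | hn
    · simp at hpos
    · exact_mod_cast hn
  rw [logb_eq_iff_rpow_eq (by norm_num) (by norm_num) hn, rpow_natCast] at hlog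
  exact_mod_cast hlog.symm

theorem mul_choose_pow_le {ℓ m : ℕ} (hℓ : 2 ≤ ℓ) (hm : 2 ^ (4 * ℓ ^ 2) = (ℓ + 1) * m) :
    ℓ * (2 * ℓ).choose ℓ ^ (ℓ + 1) ≤ m := by
  refine Nat.le_of_mul_le_mul_left ?_ (Nat.succ_pos ℓ)
  calc (ℓ + 1) * (ℓ * (2 * ℓ).choose ℓ ^ (ℓ + 1))
      ≤ 2 ^ ℓ * (2 ^ ℓ * (2 ^ (2 * ℓ)) ^ (ℓ + 1)) := by
        gcongr
        · exact Nat.lt_two_pow_self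
        · exact Nat.lt_two_pow_self.le
        · exact Nat.choose_le_two_pow _ _
    _ = 2 ^ (2 * ℓ ^ 2 + 4 * ℓ) := by ring
    _ ≤ 2 ^ (4 * ℓ ^ 2) := Nat.pow_le_pow_right (by norm_num) (by nlinarith)
    _ = (ℓ + 1) * m := hm

open SimpleGraph in
/-- Lower bound for palette sparsification with 2Δ colors. For every
δ > 0 and all large enough `n` (with `ℓ = 0.5·√(log₂ n)` a positive integer and
`(ℓ+1) ∣ n`), there is an `n`-vertex graph `G` of maximum degree `ℓ` such that the
fraction of choices of ℓ-element lists `L(v) ⊆ {1,…,2ℓ}` admitting a proper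
list-coloring of `G` is at most δ. -/
theorem stmt_5 : ∀ δ : ℝ, 0 < δ → ∃ N : ℕ, ∀ n : ℕ, N ≤ n →
    ∀ ℓ : ℕ, 0 < ℓ → (ℓ : ℝ) = 0.5 * Real.sqrt (Real.logb 2 n) → (ℓ + 1) ∣ n →
    ∃ G : SimpleGraph (Fin n),
      (∀ v, (G.neighborSet v).ncard ≤ ℓ) ∧
      (∃ v, (G.neighborSet v).ncard = ℓ) ∧
      (Nat.card {L : Fin n → Finset (Fin (2 * ℓ)) //
          (∀ v, (L v).card = ℓ) ∧
          ∃ c : Fin n → Fin (2 * ℓ), (∀ v, c v ∈ L v) ∧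
            ∀ u v, G.Adj u v → c u ≠ c v} : ℝ)
        ≤ δ * (Nat.card {L : Fin n → Finset (Fin (2 * ℓ)) //
            ∀ v, (L v).card = ℓ} : ℝ) := by
  intro δ hδ
  obtain ⟨k, hk⟩ := exists_nat_gt (-log δ)
  refine ⟨2 ^ (4 * (k + 2) ^ 2), fun n hN ℓ hℓ hℓn ⟨m, hm⟩ => ?_⟩
  have hn := eq_two_pow_of_eq_half_sqrt_logb hℓ hℓn
  have hkℓ : k + 2 ≤ ℓ := by
    rwa [hn, Nat.pow_le_pow_iff_right (by norm_num), Nat.mul_le_mul_left_iff (by norm_num),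
      Nat.pow_le_pow_iff_left (by norm_num)] at hN
  have hexp : exp (-ℓ) ≤ δ := by
    rw [← exp_log hδ, exp_le_exp]
    have : (k : ℝ) ≤ ℓ := by exact_mod_cast (k.le_add_right 2).trans hkℓ
    linarith
  let e : Fin n ≃ Fin m × Fin (ℓ + 1) :=
    (finCongr (hm.trans (mul_comm _ _))).trans finProdFinEquiv.symm
  have hdeg (v : Fin n) : ((blockCliques e).neighborSet v).ncard = ℓ := by
    simp [ncard_neighborSet_blockCliques]
  refine ⟨blockCliques e, fun v => (hdeg v).le, ⟨⟨0, by rw [hn]; positivity⟩, hdeg _⟩, ?_⟩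
  set K := (2 * ℓ).choose ℓ
  have hcolorable := card_listColorable_blockCliques_le (α := Fin (2 * ℓ)) e (ℓ := ℓ)
    (by simp) (by simp; omega)
  simp only [Fintype.card_fin] at hcolorable
  have hQ : 1 ≤ K ^ (ℓ + 1) := Nat.one_le_pow _ _ (Nat.choose_pos (by omega))
  have hm' : (ℓ : ℝ) * (K : ℝ) ^ (ℓ + 1) ≤ m := by
    exact_mod_cast mul_choose_pow_le (by omega) (hn ▸ hm)
  calc _ ≤ (((K ^ (ℓ + 1) - 1) ^ m : ℕ) : ℝ) := by exact_mod_cast hcolorable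
    _ = ((K : ℝ) ^ (ℓ + 1) - 1) ^ m := by push_cast [Nat.cast_sub hQ]; rfl
    _ ≤ δ * ((K : ℝ) ^ (ℓ + 1)) ^ m := sub_one_pow_le_mul_pow (by exact_mod_cast hQ) hm' hexp
    _ = _ := by
        rw [Nat.card_pi_finset_len, Fintype.card_fin, Fintype.card_fin, ← pow_mul, ← hm]
        push_cast; rfl
end

section
/- Let G ~ G(n,p) with np ≥ e (so ln(np) ≥ 1) and 0 < p < 1. Let α(G) denote the maximum size of an independent set in G. Then with probability at least 1 − exp(−(1/p)·ln²(np)), every set of k = ⌈3·ln(np)/p⌉ vertices of G contains at least one edge; consequently α(G) < k with that probability, i.e. Pr[α(G) ≥ ⌈3·ln(np)/p⌉] ≤ exp(−(1/p)·ln²(np)). -/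
set_option maxHeartbeats 1000000
open Finset

lemma sum_biUnion_le' {α β : Type*} [DecidableEq α] [DecidableEq β] (s : Finset α) (t : α → Finset β)
    (f : β → ℝ) (hf : ∀ b, 0 ≤ f b) :
    ∑ b ∈ s.biUnion t, f b ≤ ∑ a ∈ s, ∑ b ∈ t a, f b := by
  induction s using Finset.induction with
  | empty => simp
  | @insert a s ha ih =>
    rw [Finset.biUnion_insert, Finset.sum_insert ha]
    have h1 : ∑ b ∈ t a ∪ s.biUnion t, f b ≤ (∑ b ∈ t a, f b) + ∑ b ∈ s.biUnion t, f b := by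
      have := Finset.sum_union_inter (s₁ := t a) (s₂ := s.biUnion t) (f := f)
      have h2 : 0 ≤ ∑ b ∈ t a ∩ s.biUnion t, f b := Finset.sum_nonneg fun b _ => hf b
      linarith
    linarith

lemma sum_powerset_weight {α : Type*} [DecidableEq α] (u : Finset α) (p : ℝ) :
    ∑ E ∈ u.powerset, p ^ E.card * (1-p) ^ (u.card - E.card) = 1 := by
  have h := Finset.prod_add (fun _ : α => p) (fun _ => 1-p) u
  simp only [Finset.prod_const] at h
  have : ∀ E ∈ u.powerset, p ^ E.card * (1-p) ^ (u.card - E.card)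
      = p ^ E.card * (1-p) ^ (u \ E).card := by
    intro E hE
    rw [Finset.card_sdiff_of_subset (Finset.mem_powerset.1 hE)]
  rw [Finset.sum_congr rfl this, ← h]
  norm_num


open Classical in
lemma indep_sum (n : ℕ) (p : ℝ) (s : Finset (Fin n)) :
    ∑ G ∈ Finset.univ.filter (fun G : SimpleGraph (Fin n) =>
        (s : Set (Fin n)).Pairwise (fun a b => ¬ G.Adj a b)),
      p ^ G.edgeFinset.card * (1 - p) ^ (n.choose 2 - G.edgeFinset.card)
    = (1 - p) ^ (s.card.choose 2) := by
  classical
  set U : Finset (Sym2 (Fin n)) := (Finset.univ : Finset (Fin n)).offDiag.image Sym2.mk.uncurry with hU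
  set Ps : Finset (Sym2 (Fin n)) := s.offDiag.image Sym2.mk.uncurry with hPs
  have hUcard : U.card = n.choose 2 := by
    rw [hU, Sym2.card_image_offDiag, Finset.card_univ, Fintype.card_fin]
  have hPcard : Ps.card = s.card.choose 2 := Sym2.card_image_offDiag s
  have hPU : Ps ⊆ U := Finset.image_subset_image (Finset.offDiag_mono (Finset.subset_univ s))
  have hGE : ∀ G : SimpleGraph (Fin n), G.edgeFinset ⊆ U := by
    intro G e he
    rw [SimpleGraph.mem_edgeFinset] at he
    induction e using Sym2.ind with
    | _ a b =>
      refine Finset.mem_image.2 ⟨(a, b), ?_, rfl⟩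
      exact Finset.mem_offDiag.2
        ⟨Finset.mem_univ _, Finset.mem_univ _, ((SimpleGraph.mem_edgeSet G).mp he).ne⟩
  have hIndep : ∀ G : SimpleGraph (Fin n),
      (s : Set (Fin n)).Pairwise (fun a b => ¬ G.Adj a b) ↔ Disjoint G.edgeFinset Ps := by
    intro G
    constructor
    · intro h
      rw [Finset.disjoint_left]
      intro e heE heP
      induction e using Sym2.ind with
      | _ a b =>
        obtain ⟨⟨c, d⟩, hcd, hmk⟩ := Finset.mem_image.1 heP
        rw [Finset.mem_offDiag] at hcd
        have hadj : G.Adj a b := (SimpleGraph.mem_edgeSet G).mp (SimpleGraph.mem_edgeFinset.mp heE)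
        rw [Function.uncurry_apply_pair, Sym2.eq_iff] at hmk
        rcases hmk with ⟨hc, hd⟩ | ⟨hc, hd⟩
        · exact h (by rw [← hc]; exact hcd.1) (by rw [← hd]; exact hcd.2.1) hadj.ne hadj
        · exact h (by rw [← hd]; exact hcd.2.1) (by rw [← hc]; exact hcd.1) hadj.ne hadj
    · intro h a ha b hb hne hadj
      have heE : s(a, b) ∈ G.edgeFinset := SimpleGraph.mem_edgeFinset.2 hadj
      have heP : s(a, b) ∈ Ps :=
        Finset.mem_image.2 ⟨(a, b), Finset.mem_offDiag.2 ⟨ha, hb, hne⟩, rfl⟩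
      exact (Finset.disjoint_left.1 h heE) heP
  set u : Finset (Sym2 (Fin n)) := U \ Ps with hu
  have hEF : ∀ (E : Finset (Sym2 (Fin n))), E ⊆ U →
      ∀ (inst : Fintype ((SimpleGraph.fromEdgeSet (↑E : Set (Sym2 (Fin n)))).edgeSet)),
      @SimpleGraph.edgeFinset _ _ inst = E := by
    intro E hE inst
    apply Finset.coe_injective
    rw [SimpleGraph.coe_edgeFinset, SimpleGraph.edgeSet_fromEdgeSet]
    rw [sdiff_eq_left]
    rw [Set.disjoint_left]
    intro e he hdiag
    have heU : e ∈ U := hE he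
    obtain ⟨⟨c, d⟩, hcd, hmk⟩ := Finset.mem_image.1 heU
    rw [Finset.mem_offDiag] at hcd
    rw [← hmk] at hdiag
    exact hcd.2.2 (Sym2.mk_isDiag_iff.1 hdiag)
  have hbij : ∑ G ∈ Finset.univ.filter (fun G : SimpleGraph (Fin n) =>
        (s : Set (Fin n)).Pairwise (fun a b => ¬ G.Adj a b)),
      p ^ G.edgeFinset.card * (1 - p) ^ (n.choose 2 - G.edgeFinset.card)
      = ∑ E ∈ u.powerset, p ^ E.card * (1 - p) ^ (n.choose 2 - E.card) := by
    refine Finset.sum_bij' (fun G _ => G.edgeFinset)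
      (fun E _ => SimpleGraph.fromEdgeSet (↑E : Set (Sym2 (Fin n)))) ?_ ?_ ?_ ?_ ?_
    · intro G hG
      rw [Finset.mem_filter] at hG
      rw [Finset.mem_powerset, hu, Finset.subset_sdiff]
      exact ⟨hGE G, (hIndep G).1 hG.2⟩
    · intro E hE
      rw [Finset.mem_powerset, hu, Finset.subset_sdiff] at hE
      rw [Finset.mem_filter]
      refine ⟨Finset.mem_univ _, (hIndep _).2 ?_⟩
      beta_reduce
      rw [hEF E hE.1 _]
      exact hE.2
    · intro G hG
      beta_reduce
      rw [SimpleGraph.coe_edgeFinset, SimpleGraph.fromEdgeSet_edgeSet]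
    · intro E hE
      rw [Finset.mem_powerset, hu, Finset.subset_sdiff] at hE
      beta_reduce
      exact hEF E hE.1 _
    · intro G hG
      rfl
  rw [hbij]
  have hK2 : s.card.choose 2 ≤ n.choose 2 := by
    rw [← hUcard, ← hPcard]; exact Finset.card_le_card hPU
  have hucard : u.card = n.choose 2 - s.card.choose 2 := by
    rw [hu, Finset.card_sdiff_of_subset hPU, hUcard, hPcard]
  have hsplit : ∀ E ∈ u.powerset, p ^ E.card * (1 - p) ^ (n.choose 2 - E.card)
      = (p ^ E.card * (1 - p) ^ (u.card - E.card)) * (1 - p) ^ (s.card.choose 2) := by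
    intro E hE
    have h1 : E.card ≤ u.card := Finset.card_le_card (Finset.mem_powerset.1 hE)
    have h3 : n.choose 2 - E.card = (u.card - E.card) + s.card.choose 2 := by omega
    rw [h3, pow_add]; ring
  rw [Finset.sum_congr rfl hsplit, ← Finset.sum_mul, sum_powerset_weight, one_mul]

-- log 3 lower bound
lemma log_three_ge : (1.0935 : ℝ) ≤ Real.log 3 := by
  have h2 : (0.6931471803 : ℝ) < Real.log 2 := Real.log_two_gt_d9
  have h32 : Real.log (32/27 : ℝ) ≤ 32/27 - 1 := Real.log_le_sub_one_of_pos (by norm_num)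
  have he : Real.log (32/27 : ℝ) = 5 * Real.log 2 - 3 * Real.log 3 := by
    rw [Real.log_div (by norm_num) (by norm_num)]
    rw [show (32:ℝ) = 2^5 by norm_num, show (27:ℝ) = 3^3 by norm_num,
      Real.log_pow, Real.log_pow]
    push_cast; ring
  nlinarith

-- core polynomial inequality
lemma core_ineq (L a p : ℝ) (hL : 1.3 ≤ L) (ha : 3*L ≤ a) (hp : p ≤ 1)
    (hla : Real.log 3 + Real.log L ≤ Real.log a) :
    a * (1 + L - Real.log a) - a * (a - p)/2 + L^2 ≤ 0 := by
  have hL0 : (0:ℝ) < L := by linarith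
  have ha0 : (0:ℝ) < a := by linarith
  have hlogL : 1 - 1/L ≤ Real.log L := by
    have := Real.log_le_sub_one_of_pos (x := 1/L) (by positivity)
    rw [Real.log_div one_ne_zero (ne_of_gt hL0), Real.log_one] at this
    have h1L : 1/L ≤ 10/13 := by rw [div_le_div_iff₀ hL0 (by norm_num)]; linarith
    linarith
  have h3 : (1.0935:ℝ) ≤ Real.log 3 := log_three_ge
  have hc : 2.0935 - 1/L ≤ Real.log a := by linarith
  have hu0 : (0:ℝ) < 1/L := by positivity
  have huL : (1/L) * L = 1 := by field_simp
  have h1L : 1/L ≤ 10/13 := by rw [div_le_div_iff₀ hL0 (by norm_num)]; linarith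
  have hmul : a * (2.0935 - 1/L) ≤ a * Real.log a := by
    apply mul_le_mul_of_nonneg_left hc (le_of_lt ha0)
  nlinarith [mul_nonneg (sub_nonneg.2 ha) (sub_nonneg.2 ha),
    mul_nonneg (sub_nonneg.2 ha) (le_of_lt hL0),
    mul_nonneg (sub_nonneg.2 hL) (sub_nonneg.2 ha),
    mul_nonneg (sub_nonneg.2 hL) (le_of_lt ha0),
    mul_pos hL0 ha0]
lemma analytic (n k : ℕ) (p : ℝ) (hp0 : 0 < p) (hp1 : p < 1)
    (hnp : Real.exp 1 ≤ (n:ℝ) * p) (hk : 3 * Real.log ((n:ℝ)*p) / p ≤ (k:ℝ)) :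
    (n.choose k : ℝ) * (1-p)^(k.choose 2) ≤ Real.exp (-(1/p) * (Real.log ((n:ℝ)*p))^2) := by
  set L := Real.log ((n:ℝ)*p) with hLdef
  have hnp0 : (0:ℝ) < (n:ℝ)*p := lt_of_lt_of_le (Real.exp_pos 1) hnp
  have hn0 : (0:ℝ) < (n:ℝ) := by
    rcases Nat.eq_zero_or_pos n with h | h
    · rw [h] at hnp0; norm_num at hnp0
    · exact_mod_cast h
  have hL1 : (1:ℝ) ≤ L := by
    rw [hLdef, Real.le_log_iff_exp_le hnp0]; simpa using hnp
  rcases lt_or_ge n k with hnk | hkn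
  · rw [Nat.choose_eq_zero_of_lt hnk]
    simpa using (Real.exp_pos _).le
  · set x := (k:ℝ) with hxdef
    have hx0 : (0:ℝ) < x := lt_of_lt_of_le (by positivity) hk
    set a := p * x with hadef
    have ha0 : (0:ℝ) < a := by positivity
    have ha3 : 3 * L ≤ a := by
      have := mul_le_mul_of_nonneg_left hk hp0.le
      rwa [mul_div_cancel₀ _ (ne_of_gt hp0)] at this
    have haE : a ≤ Real.exp L := by
      rw [hLdef, Real.exp_log hnp0]
      have : x ≤ (n:ℝ) := Nat.cast_le.2 hkn
      nlinarith
    have hL13 : (1.3:ℝ) ≤ L := by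
      by_contra h'
      push_neg at h'
      have h2L : 2 - L ≤ Real.exp (1 - L) := by
        have := Real.add_one_le_exp (1 - L); linarith
      have hee : (2 - L) * Real.exp L ≤ Real.exp 1 := by
        calc (2 - L) * Real.exp L ≤ Real.exp (1 - L) * Real.exp L :=
              mul_le_mul_of_nonneg_right h2L (Real.exp_pos L).le
        _ = Real.exp 1 := by rw [← Real.exp_add]; ring_nf
      have he : Real.exp 1 < 2.7182818286 := Real.exp_one_lt_d9
      nlinarith [mul_le_mul_of_nonneg_left haE (by linarith : (0:ℝ) ≤ 2 - L)]
    -- main bounds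
    have hchoose : (n.choose k : ℝ) ≤ (n:ℝ)^k / (k.factorial : ℝ) := Nat.choose_le_pow_div k n
    have hfact : x^k / (k.factorial : ℝ) ≤ Real.exp x := by
      have hsum := Real.sum_le_exp_of_nonneg (x := x) hx0.le (k+1)
      have hsingle : x^k / (k.factorial : ℝ) ≤ ∑ i ∈ Finset.range (k+1), x^i / (i.factorial : ℝ) :=
        Finset.single_le_sum (f := fun i => x^i / (i.factorial : ℝ)) (fun i _ => by positivity)
          (Finset.self_mem_range_succ k)
      linarith
    have hK : ((k.choose 2 : ℕ) : ℝ) = x * (x - 1) / 2 := by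
      rw [Nat.cast_choose_two]
    have h1p : (1-p)^(k.choose 2) ≤ Real.exp (-(p * ((k.choose 2 : ℕ):ℝ))) := by
      have h' : 1 - p ≤ Real.exp (-p) := by have := Real.add_one_le_exp (-p); linarith
      calc (1-p)^(k.choose 2) ≤ (Real.exp (-p))^(k.choose 2) :=
            pow_le_pow_left₀ (by linarith) h' _
      _ = Real.exp (-(p * ((k.choose 2:ℕ):ℝ))) := by
          rw [← Real.exp_nat_mul]; ring_nf
    -- express n^k and k^k as exponentials
    have hnk : (n:ℝ)^k = Real.exp ((k:ℝ) * Real.log n) := by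
      rw [← Real.exp_log hn0, ← Real.exp_nat_mul, Real.exp_log hn0]
    have hkk : x^k = Real.exp ((k:ℝ) * Real.log x) := by
      rw [← Real.exp_log hx0, ← Real.exp_nat_mul, Real.exp_log hx0]
    have hfact' : (n:ℝ)^k / (k.factorial : ℝ) ≤ Real.exp ((k:ℝ) * Real.log n + x - (k:ℝ) * Real.log x) := by
      have hfpos : (0:ℝ) < (k.factorial : ℝ) := by exact_mod_cast (Nat.factorial_pos k)
      rw [div_le_iff₀ hfpos]
      rw [hnk]
      have h2 : x^k ≤ Real.exp x * (k.factorial : ℝ) := by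
        rw [← div_le_iff₀ hfpos] at *; exact hfact
      rw [hkk] at h2
      calc Real.exp ((k:ℝ) * Real.log ↑n)
          = Real.exp ((k:ℝ) * Real.log n + x - (k:ℝ) * Real.log x) *
            Real.exp ((k:ℝ) * Real.log x) / Real.exp x := by
            rw [← Real.exp_add, ← Real.exp_sub]; ring_nf
        _ ≤ Real.exp ((k:ℝ) * Real.log n + x - (k:ℝ) * Real.log x) * ((Real.exp x * (k.factorial : ℝ))) / Real.exp x := by
            gcongr
        _ = Real.exp ((k:ℝ) * Real.log n + x - (k:ℝ) * Real.log x) * (k.factorial : ℝ) := by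
            field_simp
    -- exponent inequality
    have hloga : Real.log a = Real.log p + Real.log x :=
      Real.log_mul (ne_of_gt hp0) (ne_of_gt hx0)
    have hlogn : L = Real.log n + Real.log p := by
      rw [hLdef, Real.log_mul (ne_of_gt hn0) (ne_of_gt hp0)]
    have hla : Real.log 3 + Real.log L ≤ Real.log a := by
      have h3L : Real.log (3 * L) ≤ Real.log a := by
        apply Real.log_le_log (by positivity) ha3
      rwa [Real.log_mul (by norm_num) (by linarith)] at h3L
    have hcore := core_ineq L a p hL13 ha3 hp1.le hla
    have hexp : (k:ℝ) * Real.log n + x - (k:ℝ) * Real.log x - p * ((k.choose 2:ℕ):ℝ)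
        ≤ -(1/p) * L^2 := by
      rw [hK]
      have hLa : Real.log n - Real.log x = L - Real.log a := by
        rw [hloga, hlogn]; ring
      have hxc : x * (a * (1 + L - Real.log a) - a * (a - p)/2 + L^2) ≤ 0 := by
        have := mul_le_mul_of_nonneg_left hcore hx0.le
        simpa using this
      have haa : x * a * p = a^2 := by rw [hadef]; ring
      have hap : a / p = x := by rw [hadef]; field_simp
      have hexpand : a * ((k:ℝ) * Real.log n + x - (k:ℝ) * Real.log x - p * (x*(x-1)/2))
          = a * x * (L - Real.log a) + a * x - a^2 * (x-1)/2 := by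
        have hcast : (k:ℝ) = x := rfl
        rw [hcast]
        have h1 : a * (x * Real.log n) - a * (x * Real.log x) = a * x * (L - Real.log a) := by
          rw [show a * (x * Real.log n) - a * (x * Real.log x) = a * x * (Real.log n - Real.log x) by ring, hLa]
        have h2 : a * (p * (x*(x-1)/2)) = a^2 * (x-1)/2 := by
          rw [show a * (p * (x*(x-1)/2)) = (x * a * p) * (x-1)/2 by ring, haa]
        linarith [h1, h2]
      have hrhs : a * (-(1/p) * L^2) = -x * L^2 := by
        rw [show a * (-(1/p) * L^2) = -(a/p) * L^2 by ring, hap]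
      have final : a * ((k:ℝ) * Real.log n + x - (k:ℝ) * Real.log x - p * (x*(x-1)/2))
          ≤ a * (-(1/p) * L^2) := by
        rw [hexpand, hrhs]
        nlinarith [hxc, haa]
      exact le_of_mul_le_mul_left final ha0
    calc (n.choose k : ℝ) * (1-p)^(k.choose 2)
        ≤ ((n:ℝ)^k / (k.factorial : ℝ)) * Real.exp (-(p * ((k.choose 2:ℕ):ℝ))) := by
          apply mul_le_mul hchoose h1p (pow_nonneg (by linarith) _) (by positivity)
      _ ≤ Real.exp ((k:ℝ) * Real.log n + x - (k:ℝ) * Real.log x) *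
            Real.exp (-(p * ((k.choose 2:ℕ):ℝ))) := by
          gcongr
      _ = Real.exp ((k:ℝ) * Real.log n + x - (k:ℝ) * Real.log x - p * ((k.choose 2:ℕ):ℝ)) := by
          rw [← Real.exp_add]; ring_nf
      _ ≤ Real.exp (-(1/p) * L^2) := Real.exp_le_exp.2 hexp



open Classical in
/-- In G(n,p) with 0 < p < 1 and np ≥ e, the probability (weighted
count over all graphs) that G contains an independent set of size
k = ⌈3·ln(np)/p⌉ is at most exp(−(1/p)·ln²(np)); equivalently, with probability at
least 1 − exp(−(1/p)·ln²(np)) every k-set of vertices spans an edge and α(G) < k. -/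
theorem stmt_10 (n : ℕ) (p : ℝ) (hp0 : 0 < p) (hp1 : p < 1)
    (hnp : Real.exp 1 ≤ (n : ℝ) * p) :
    ∑ G ∈ Finset.univ.filter (fun G : SimpleGraph (Fin n) =>
        ∃ s : Finset (Fin n), s.card = ⌈3 * Real.log ((n : ℝ) * p) / p⌉₊ ∧
          (s : Set (Fin n)).Pairwise (fun a b => ¬ G.Adj a b)),
      p ^ G.edgeSet.ncard * (1 - p) ^ (n.choose 2 - G.edgeSet.ncard)
    ≤ Real.exp (-(1 / p) * (Real.log ((n : ℝ) * p)) ^ 2) := by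
  classical
  set k := ⌈3 * Real.log ((n : ℝ) * p) / p⌉₊ with hkdef
  have hw : ∀ G : SimpleGraph (Fin n), G.edgeSet.ncard = G.edgeFinset.card := fun G => by
    rw [← SimpleGraph.coe_edgeFinset, Set.ncard_coe_finset]
  have hwnn : ∀ G : SimpleGraph (Fin n),
      0 ≤ p ^ G.edgeFinset.card * (1 - p) ^ (n.choose 2 - G.edgeFinset.card) := fun G =>
    mul_nonneg (pow_nonneg hp0.le _) (pow_nonneg (by linarith) _)
  calc ∑ G ∈ Finset.univ.filter (fun G : SimpleGraph (Fin n) =>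
        ∃ s : Finset (Fin n), s.card = k ∧
          (s : Set (Fin n)).Pairwise (fun a b => ¬ G.Adj a b)),
      p ^ G.edgeSet.ncard * (1 - p) ^ (n.choose 2 - G.edgeSet.ncard)
      = ∑ G ∈ Finset.univ.filter (fun G : SimpleGraph (Fin n) =>
        ∃ s : Finset (Fin n), s.card = k ∧
          (s : Set (Fin n)).Pairwise (fun a b => ¬ G.Adj a b)),
      p ^ G.edgeFinset.card * (1 - p) ^ (n.choose 2 - G.edgeFinset.card) := by
        apply Finset.sum_congr rfl
        intro G _
        rw [hw G]
    _ ≤ ∑ s ∈ Finset.powersetCard k (Finset.univ : Finset (Fin n)),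
        ∑ G ∈ Finset.univ.filter (fun G : SimpleGraph (Fin n) =>
          (s : Set (Fin n)).Pairwise (fun a b => ¬ G.Adj a b)),
        p ^ G.edgeFinset.card * (1 - p) ^ (n.choose 2 - G.edgeFinset.card) := by
        have hsub : Finset.univ.filter (fun G : SimpleGraph (Fin n) =>
            ∃ s : Finset (Fin n), s.card = k ∧
              (s : Set (Fin n)).Pairwise (fun a b => ¬ G.Adj a b))
            ⊆ (Finset.powersetCard k (Finset.univ : Finset (Fin n))).biUnion
              (fun s => Finset.univ.filter (fun G : SimpleGraph (Fin n) =>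
                (s : Set (Fin n)).Pairwise (fun a b => ¬ G.Adj a b))) := by
          intro G hG
          rw [Finset.mem_filter] at hG
          obtain ⟨-, t, hcard, hind⟩ := hG
          exact Finset.mem_biUnion.2 ⟨t,
            Finset.mem_powersetCard.2 ⟨Finset.subset_univ t, hcard⟩,
            Finset.mem_filter.2 ⟨Finset.mem_univ _, hind⟩⟩
        refine le_trans (Finset.sum_le_sum_of_subset_of_nonneg hsub
          (fun G _ _ => hwnn G)) ?_
        exact sum_biUnion_le' _ _ _ hwnn
    _ = ∑ s ∈ Finset.powersetCard k (Finset.univ : Finset (Fin n)),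
        (1 - p) ^ (k.choose 2) := by
        apply Finset.sum_congr rfl
        intro s hs
        rw [indep_sum n p s, (Finset.mem_powersetCard.1 hs).2]
    _ = (n.choose k : ℝ) * (1 - p) ^ (k.choose 2) := by
        rw [Finset.sum_const, Finset.card_powersetCard, Finset.card_univ,
          Fintype.card_fin, nsmul_eq_mul]
    _ ≤ Real.exp (-(1 / p) * (Real.log ((n : ℝ) * p)) ^ 2) :=
        analytic n k p hp0 hp1 hnp (Nat.le_ceil _)
end

section
/- Define sequences α₁ = 8d/ln d, β₁ = d, keep_i = (1 − 1/(2 ln d · α_i))^{2β_i}, color_i = (1 − 1/(2 ln d · α_i))^{keep_i·α_i/2}, α_{i+1} = keep_i·α_i, β_{i+1} = color_i·keep_i·β_i. Then for all d larger than an absolute constant: (a) color_i ≤ 1 − 1/(6 ln d) for every i; (b) setting r_i = β_i/α_i, one has r_{i+1} ≤ (1 − 1/(6 ln d))^i · r₁ for all i ≥ 1; (c) there exists an absolute constant δ > 0 (independent of d) such that α_i ≥ d^δ for all i. -/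
/-!
Both estimates are proved together by induction on `i`, with `ρ = 1 - 1 / (6 ln d)`.
If `rᵢ ≤ ρ^(i-1) ln d / 8` and `αᵢ ≥ 1`, then `x = 1 / (2 ln d αᵢ) ≤ 1 / 11`, and
`1 - x ≥ exp (-(11 / 10) x)` gives `keepᵢ ≥ exp (-(11 / 80) ρ^(i-1)) ≥ 3 / 4`; hence
`colorᵢ ≤ exp (-keepᵢ / (4 ln d)) ≤ ρ` and `rᵢ₊₁ = colorᵢ rᵢ` keeps the decay. The losses of
`ln α` form a geometric series summing to at most `(33 / 40) ln d`, and since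
`ln α₁ = ln d + ln (8 / ln d)` this leaves `αᵢ ≥ d ^ (1 / 10)`.
-/

open Real

lemma exp_neg_le_one_sub {x : ℝ} (hx₀ : 0 ≤ x) (hx : x ≤ 1 / 11) :
    exp (-(11 / 10 * x)) ≤ 1 - x := by
  rw [exp_neg, inv_le_iff_one_le_mul₀ (exp_pos _)]
  nlinarith [add_one_le_exp (11 / 10 * x)]

lemma exp_neg_le_one_sub_rpow {x y : ℝ} (hx₀ : 0 ≤ x) (hx : x ≤ 1 / 11) (hy : 0 ≤ y) :
    exp (-(11 / 10 * x * y)) ≤ (1 - x) ^ y := by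
  rw [show -(11 / 10 * x * y) = -(11 / 10 * x) * y by ring, exp_mul]
  exact rpow_le_rpow (exp_nonneg _) (exp_neg_le_one_sub hx₀ hx) hy

lemma one_sub_rpow_le_exp_neg {x y : ℝ} (hx : x ≤ 1) (hy : 0 ≤ y) :
    (1 - x) ^ y ≤ exp (-(x * y)) := by
  rw [← neg_mul, exp_mul]
  exact rpow_le_rpow (by linarith) (one_sub_le_exp_neg x) hy

lemma exp_neg_three_div_le {L : ℝ} (hL : 3 / 2 ≤ L) :
    exp (-(3 / (16 * L))) ≤ 1 - 1 / (6 * L) := by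
  rw [exp_neg, inv_le_iff_one_le_mul₀ (exp_pos _)]
  have hprod : 1 ≤ (1 - 1 / (6 * L)) * (3 / (16 * L) + 1) := by
    rw [show (1 - 1 / (6 * L)) * (3 / (16 * L) + 1) = 1 + (2 * L - 3) / (96 * L ^ 2) by
      field_simp; ring]
    have : 0 ≤ (2 * L - 3) / (96 * L ^ 2) := div_nonneg (by linarith) (by positivity)
    linarith
  have hε : 0 ≤ 1 - 1 / (6 * L) := by
    rw [sub_nonneg, div_le_one (by positivity)]; linarith
  exact hprod.trans (mul_le_mul_of_nonneg_left (add_one_le_exp _) hε)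

lemma le_eight_mul_exp {L : ℝ} (hL : 0 ≤ L) : L ≤ 8 * exp (3 * L / 40) := by
  have h := add_one_le_exp (3 * L / 80)
  rw [show 3 * L / 40 = 3 * L / 80 + 3 * L / 80 by ring, exp_add]
  nlinarith [mul_le_mul h h (by positivity) (exp_pos _).le, sq_nonneg (3 * L / 80 - 1)]

lemma exp_div_ten_le {L : ℝ} (hL : 0 < L) :
    exp (L / 10) ≤ 8 * exp L / L * exp (-(33 / 40) * L) := by
  rw [div_mul_eq_mul_div, le_div_iff₀ hL, mul_assoc, ← exp_add,
    show L + -(33 / 40) * L = 3 * L / 40 + L / 10 by ring, exp_add, ← mul_assoc, mul_comm]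
  exact mul_le_mul_of_nonneg_right (le_eight_mul_exp hL.le) (exp_pos _).le

lemma keep_lower_bound {L a b q : ℝ} (hL : 6 ≤ L) (ha : 1 ≤ a) (hb : 0 ≤ b)
    (hba : b / a ≤ q * (L / 8)) :
    exp (-(11 / 80 * q)) ≤ (1 - 1 / (2 * L * a)) ^ (2 * b) := by
  have hx : 1 / (2 * L * a) ≤ 1 / 11 :=
    one_div_le_one_div_of_le (by norm_num) (by nlinarith)
  refine le_trans ?_ (exp_neg_le_one_sub_rpow (by positivity) hx (by positivity))
  rw [exp_le_exp, neg_le_neg_iff,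
    show 11 / 10 * (1 / (2 * L * a)) * (2 * b) = 11 / 10 * (b / a / L) by field_simp]
  have : b / a / L ≤ q / 8 := by
    rw [div_le_iff₀ (by linarith)]; linarith
  linarith

lemma color_upper_bound {L a k : ℝ} (hL : 3 / 2 ≤ L) (ha : 1 ≤ a) (hk : 3 / 4 ≤ k) :
    (1 - 1 / (2 * L * a)) ^ (k * a / 2) ≤ 1 - 1 / (6 * L) := calc
  _ ≤ exp (-(1 / (2 * L * a) * (k * a / 2))) :=
      one_sub_rpow_le_exp_neg (by rw [div_le_one (by positivity)]; nlinarith) (by positivity)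
  _ = exp (-(k / (4 * L))) := by congr 2; field_simp; ring
  _ ≤ exp (-(3 / (16 * L))) := by
      rw [exp_le_exp, neg_le_neg_iff, div_le_div_iff₀ (by positivity) (by positivity)]
      nlinarith
  _ ≤ 1 - 1 / (6 * L) := exp_neg_three_div_le hL

lemma one_sub_one_div_six_mul_mem_Icc {L : ℝ} (hL : 1 ≤ L) :
    1 - 1 / (6 * L) ∈ Set.Icc 0 1 := by
  have hε₀ : 0 < 1 / (6 * L) := by positivity
  have hε₁ : 1 / (6 * L) ≤ 1 := by rw [div_le_one (by positivity)]; linarith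
  exact ⟨by linarith, by linarith⟩

lemma one_sub_one_div_six_mul_pow_mem_Icc {L : ℝ} (hL : 1 ≤ L) (n : ℕ) :
    (1 - 1 / (6 * L)) ^ n ∈ Set.Icc 0 1 :=
  have ⟨h₀, h₁⟩ := one_sub_one_div_six_mul_mem_Icc hL
  ⟨pow_nonneg h₀ n, pow_le_one₀ h₀ h₁⟩

structure ColorRecursion (d : ℝ) (α β keep color : ℕ → ℝ) : Prop where
  α_pos : ∀ i, 1 ≤ i → 0 < α i
  β_pos : ∀ i, 1 ≤ i → 0 < β i
  α_one : α 1 = 8 * d / log d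
  β_one : β 1 = d
  keep_eq : ∀ i, 1 ≤ i → keep i = (1 - 1 / (2 * log d * α i)) ^ (2 * β i)
  color_eq : ∀ i, 1 ≤ i → color i = (1 - 1 / (2 * log d * α i)) ^ (keep i * α i / 2)
  α_succ : ∀ i, 1 ≤ i → α (i + 1) = keep i * α i
  β_succ : ∀ i, 1 ≤ i → β (i + 1) = color i * keep i * β i

namespace ColorRecursion

/-- The constant `33 / 40 = 6 * 11 / 80` makes the losses `keep_j ≥ exp (-(11 / 80) ρ^j)`,
`ρ = 1 - 1 / (6 ln d)`, add up to `(33 / 40) ln d (1 - ρ^n)` in `ln α`. -/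
def Invariant (d : ℝ) (α β : ℕ → ℝ) (n : ℕ) : Prop :=
  β (n + 1) / α (n + 1) ≤ (1 - 1 / (6 * log d)) ^ n * (β 1 / α 1) ∧
    α 1 * exp (-(33 / 40) * log d * (1 - (1 - 1 / (6 * log d)) ^ n)) ≤ α (n + 1)

variable {d : ℝ} {α β keep color : ℕ → ℝ} {n : ℕ}

lemma d_pos (h : ColorRecursion d α β keep color) : 0 < d :=
  h.β_one ▸ h.β_pos 1 le_rfl

lemma ratio_one (h : ColorRecursion d α β keep color) (hL : 0 < log d) :
    β 1 / α 1 = log d / 8 := by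
  have := h.d_pos
  rw [h.α_one, h.β_one]
  field_simp

lemma rpow_le_α (h : ColorRecursion d α β keep color) (hL : 6 ≤ log d)
    (hn : Invariant d α β n) : d ^ (1 / 10 : ℝ) ≤ α (n + 1) := by
  obtain ⟨hq₀, hq₁⟩ := one_sub_one_div_six_mul_pow_mem_Icc (by linarith : 1 ≤ log d) n
  have hα₁ : 0 < α 1 := h.α_pos 1 le_rfl
  calc d ^ (1 / 10 : ℝ) = exp (log d / 10) := by rw [rpow_def_of_pos h.d_pos]; ring_nf
    _ ≤ α 1 * exp (-(33 / 40) * log d) := by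
        have := exp_div_ten_le (L := log d) (by linarith)
        rwa [exp_log h.d_pos, ← h.α_one] at this
    _ ≤ α 1 * exp (-(33 / 40) * log d * (1 - (1 - 1 / (6 * log d)) ^ n)) :=
        mul_le_mul_of_nonneg_left (exp_le_exp.2 (by nlinarith)) hα₁.le
    _ ≤ α (n + 1) := hn.2

lemma one_le_α (h : ColorRecursion d α β keep color) (hL : 6 ≤ log d)
    (hn : Invariant d α β n) : 1 ≤ α (n + 1) :=
  (one_le_rpow (by linarith [add_one_le_exp (log d), exp_log h.d_pos]) (by norm_num)).trans
    (h.rpow_le_α hL hn)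

lemma exp_le_keep (h : ColorRecursion d α β keep color) (hL : 6 ≤ log d)
    (hn : Invariant d α β n) :
    exp (-(11 / 80 * (1 - 1 / (6 * log d)) ^ n)) ≤ keep (n + 1) := by
  rw [h.keep_eq _ (Nat.le_add_left 1 n)]
  exact keep_lower_bound hL (h.one_le_α hL hn) (h.β_pos _ (Nat.le_add_left 1 n)).le
    (h.ratio_one (by linarith) ▸ hn.1)

lemma three_quarters_le_keep (h : ColorRecursion d α β keep color) (hL : 6 ≤ log d)
    (hn : Invariant d α β n) : 3 / 4 ≤ keep (n + 1) := by
  have hq₁ := (one_sub_one_div_six_mul_pow_mem_Icc (by linarith : 1 ≤ log d) n).2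
  linarith [h.exp_le_keep hL hn, add_one_le_exp (-(11 / 80 * (1 - 1 / (6 * log d)) ^ n))]

lemma color_le (h : ColorRecursion d α β keep color) (hL : 6 ≤ log d)
    (hn : Invariant d α β n) : color (n + 1) ≤ 1 - 1 / (6 * log d) := by
  rw [h.color_eq _ (Nat.le_add_left 1 n)]
  exact color_upper_bound (by linarith) (h.one_le_α hL hn) (h.three_quarters_le_keep hL hn)

lemma invariant_succ (h : ColorRecursion d α β keep color) (hL : 6 ≤ log d)
    (hn : Invariant d α β n) : Invariant d α β (n + 1) := by
  have hi : 1 ≤ n + 1 := Nat.le_add_left 1 n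
  have hα := h.α_pos _ hi
  have hkeep := (exp_pos _).trans_le (h.exp_le_keep hL hn)
  refine ⟨?_, ?_⟩
  · have hratio : β (n + 1 + 1) / α (n + 1 + 1) = color (n + 1) * (β (n + 1) / α (n + 1)) := by
      rw [h.β_succ _ hi, h.α_succ _ hi]
      field_simp
    rw [hratio, pow_succ, mul_comm _ (1 - _), mul_assoc]
    exact mul_le_mul (h.color_le hL hn) hn.1 (div_pos (h.β_pos _ hi) hα).le
      (one_sub_one_div_six_mul_mem_Icc (by linarith)).1
  · have hexp : -(33 / 40) * log d * (1 - (1 - 1 / (6 * log d)) ^ (n + 1)) =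
        -(11 / 80 * (1 - 1 / (6 * log d)) ^ n) +
          -(33 / 40) * log d * (1 - (1 - 1 / (6 * log d)) ^ n) := by
      rw [pow_succ]; field_simp; ring
    rw [h.α_succ _ hi, hexp, exp_add, mul_left_comm]
    exact mul_le_mul (h.exp_le_keep hL hn) hn.2
      (mul_pos (h.α_pos 1 le_rfl) (exp_pos _)).le hkeep.le

lemma invariant (h : ColorRecursion d α β keep color) (hL : 6 ≤ log d) :
    ∀ n, Invariant d α β n
  | 0 => by simp [Invariant]
  | n + 1 => h.invariant_succ hL (h.invariant hL n)

end ColorRecursion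

/-- For the sequences α₁ = 8d/ln d, β₁ = d,
keepᵢ = (1 − 1/(2 ln d·αᵢ))^{2βᵢ}, colorᵢ = (1 − 1/(2 ln d·αᵢ))^{keepᵢ·αᵢ/2},
α_{i+1} = keepᵢ·αᵢ, β_{i+1} = colorᵢ·keepᵢ·βᵢ, for all d larger than an absolute
constant: (a) colorᵢ ≤ 1 − 1/(6 ln d); (b) with rᵢ = βᵢ/αᵢ,
r_{i+1} ≤ (1 − 1/(6 ln d))ⁱ·r₁; (c) there is an absolute constant δ > 0 with
αᵢ ≥ d^δ for all i. -/
theorem stmt_19 : ∃ δ : ℝ, 0 < δ ∧ ∃ d₀ : ℝ, ∀ d : ℝ, d₀ < d →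
    ∀ α β keep color : ℕ → ℝ,
    (∀ i, 1 ≤ i → 0 < α i) → (∀ i, 1 ≤ i → 0 < β i) →
    α 1 = 8 * d / Real.log d → β 1 = d →
    (∀ i, 1 ≤ i → keep i = (1 - 1 / (2 * Real.log d * α i)) ^ (2 * β i)) →
    (∀ i, 1 ≤ i → color i = (1 - 1 / (2 * Real.log d * α i)) ^ (keep i * α i / 2)) →
    (∀ i, 1 ≤ i → α (i + 1) = keep i * α i) →
    (∀ i, 1 ≤ i → β (i + 1) = color i * keep i * β i) →
    (∀ i, 1 ≤ i → color i ≤ 1 - 1 / (6 * Real.log d)) ∧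
    (∀ i, 1 ≤ i → β (i + 1) / α (i + 1) ≤
        (1 - 1 / (6 * Real.log d)) ^ i * (β 1 / α 1)) ∧
    (∀ i, 1 ≤ i → d ^ δ ≤ α i) := by
  refine ⟨1 / 10, by norm_num, exp 6,
    fun d hd α β keep color hα hβ hα₁ hβ₁ hkeep hcolor hαs hβs ↦ ?_⟩
  have h : ColorRecursion d α β keep color := ⟨hα, hβ, hα₁, hβ₁, hkeep, hcolor, hαs, hβs⟩
  have hL : 6 ≤ log d := ((lt_log_iff_exp_lt ((exp_pos 6).trans hd)).2 hd).le
  refine ⟨fun i hi ↦ ?_, fun i _ ↦ (h.invariant hL i).1, fun i hi ↦ ?_⟩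
  all_goals obtain ⟨n, rfl⟩ := Nat.exists_eq_add_of_le' hi
  · exact h.color_le hL (h.invariant hL n)
  · exact h.rpow_le_α hL (h.invariant hL n)
end
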